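/- Every contractive unital algebra homomorphism from a unital C*-algebra into B(H) is a *-homomorphism. -/

import Mathlib

/-!
A contractive unital homomorphism `π` sends a unitary `u` to a contraction `π u` whose
inverse `π (star u)` is again a contraction. Such an operator is isometric, hence unitary,
and its adjoint is its inverse: `π (star u) = star (π u)`. Both sides of
`π (star a) = star (π a)` are conjugate-linear in `a`, and a unital C⋆-algebra is spanned
by its unitaries.
-/

open ContinuousLinearMap

theorem CStarRing.norm_le_one_of_mem_unitary {E : Type*} [NormedRing E] [StarRing E]
    [CStarRing E] {U : E} (hU : U ∈ unitary E) : ‖U‖ ≤ 1 := by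
  rcases subsingleton_or_nontrivial E with _ | _
  · simp [Subsingleton.elim U 0]
  · exact (CStarRing.norm_of_mem_unitary hU).le

namespace ContinuousLinearMap

variable {𝕜 E F : Type*}

theorem norm_map_of_comp_eq_id [NontriviallyNormedField 𝕜] [SeminormedAddCommGroup E]
    [SeminormedAddCommGroup F] [NormedSpace 𝕜 E] [NormedSpace 𝕜 F]
    {T : E →L[𝕜] F} {S : F →L[𝕜] E}
    (hST : S ∘L T = .id 𝕜 E) (hT : ‖T‖ ≤ 1) (hS : ‖S‖ ≤ 1) (x : E) : ‖T x‖ = ‖x‖ := by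
  refine le_antisymm (T.le_of_opNorm_le hT x |>.trans_eq (one_mul _)) ?_
  calc ‖x‖ = ‖S (T x)‖ := by rw [← comp_apply, hST, id_apply]
    _ ≤ 1 * ‖T x‖ := S.le_of_opNorm_le hS (T x)
    _ = ‖T x‖ := one_mul _

theorem mem_unitary_of_norm_le_one [RCLike 𝕜] [NormedAddCommGroup E] [InnerProductSpace 𝕜 E]
    [CompleteSpace E] {T S : E →L[𝕜] E} (hST : S * T = 1) (hTS : T * S = 1)
    (hT : ‖T‖ ≤ 1) (hS : ‖S‖ ≤ 1) : T ∈ unitary (E →L[𝕜] E) := by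
  have hstar_mul : star T * T = 1 :=
    (norm_map_iff_adjoint_comp_self T).mp (norm_map_of_comp_eq_id hST hT hS)
  have hstar : star T = S := left_inv_eq_right_inv hstar_mul hTS
  exact Unitary.mem_iff.mpr ⟨hstar_mul, hstar ▸ hTS⟩

end ContinuousLinearMap

theorem map_star_of_mem_unitary {A H F : Type*} [NormedRing A] [StarRing A] [CStarRing A]
    [NormedAddCommGroup H] [InnerProductSpace ℂ H] [CompleteSpace H]
    [FunLike F A (H →L[ℂ] H)] [MonoidHomClass F A (H →L[ℂ] H)]
    (π : F) (hπ : ∀ a, ‖π a‖ ≤ ‖a‖) {u : A} (hu : u ∈ unitary A) :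
    π (star u) = star (π u) := by
  have hleft : π (star u) * π u = 1 := by
    rw [← map_mul, Unitary.star_mul_self_of_mem hu, map_one]
  have hright : π u * π (star u) = 1 := by
    rw [← map_mul, Unitary.mul_star_self_of_mem hu, map_one]
  have hunitary : π u ∈ unitary (H →L[ℂ] H) :=
    mem_unitary_of_norm_le_one hleft hright
      ((hπ u).trans (CStarRing.norm_le_one_of_mem_unitary hu))
      ((hπ _).trans (CStarRing.norm_le_one_of_mem_unitary (Unitary.star_mem hu)))
  exact (left_inv_eq_right_inv (Unitary.star_mul_self_of_mem hunitary) hright).symm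

/-- Every contractive unital algebra homomorphism from a unital C*-algebra into `B(H)`
is a `*`-homomorphism. -/
theorem stmt9 {A : Type*} [NormedRing A] [StarRing A] [CStarRing A] [NormedAlgebra ℂ A]
    [CompleteSpace A] [StarModule ℂ A]
    {H : Type*} [NormedAddCommGroup H] [InnerProductSpace ℂ H] [CompleteSpace H]
    (π : A →ₐ[ℂ] (H →L[ℂ] H)) (hπ : ∀ a, ‖π a‖ ≤ ‖a‖) :
    ∀ a : A, π (star a) = ContinuousLinearMap.adjoint (π a) := by
  let _ : CStarAlgebra A := {}
  intro a
  have ha : a ∈ Submodule.span ℂ (unitary A : Set A) := CStarAlgebra.span_unitary A ▸ trivial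
  rw [← star_eq_adjoint]
  induction ha using Submodule.span_induction with
  | mem u hu => exact map_star_of_mem_unitary π hπ hu
  | zero => simp
  | add x y _ _ hx hy => simp [hx, hy]
  | smul c x _ hx => simp [hx]
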